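/- Let H be a Hilbert space, V ⊆ H a closed subspace, L : H → ℝ^m continuous linear with V ∩ ker(L) = {0} and the compatibility indicator μ = sup{‖u‖/‖u − P_V u‖ : u ∈ ker(L), u ≠ 0} finite. Let y ∈ range(L), ε > 0, and f̂ the minimizer of ‖f − P_V f‖ subject to L(f) = y, assumed to satisfy ‖f̂ − P_V f̂‖ ≤ ε. Then for every z ∈ H, sup{‖f − f̂‖ : ‖f − P_V f‖ ≤ ε, L(f) = y} ≤ sup{‖f − z‖ : ‖f − P_V f‖ ≤ ε, L(f) = y}. -/

import Mathlib

/-!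
Write `A f = f - P_V f` and let `u ∈ ker L`. Since `f̂` minimizes `‖A ·‖` on the affine space
`f̂ + ker L`, the quadratic `t ↦ ‖A f̂ + t • A u‖²` is minimal at `t = 0`, so `A f̂ ⟂ A u` and hence
`‖A (f̂ - u)‖ = ‖A (f̂ + u)‖`. Thus the feasible set `{f | L f = y, ‖A f‖ ≤ ε}` is symmetric about `f̂`.
For a set symmetric about `c`, every point `f` and its mirror image `2c - f` satisfy
`2 ‖f - c‖ ≤ ‖f - z‖ + ‖(2c - f) - z‖`, so the centre `c` has the least worst-case distance.
-/

open scoped InnerProductSpace ENNReal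

section Reflection

variable {E : Type*} [SeminormedAddCommGroup E] [NormedSpace ℝ E]

theorem norm_sub_le_max_norm_sub_reflection (c f z : E) :
    ‖f - c‖ ≤ max ‖f - z‖ ‖c - (f - c) - z‖ := by
  have htwice : 2 * ‖f - c‖ ≤ ‖f - z‖ + ‖c - (f - c) - z‖ :=
    calc 2 * ‖f - c‖ = ‖(2 : ℝ) • (f - c)‖ := by rw [norm_smul, Real.norm_two]
      _ = ‖(f - z) - (c - (f - c) - z)‖ := by congr 1; module
      _ ≤ ‖f - z‖ + ‖c - (f - c) - z‖ := norm_sub_le _ _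
  rcases le_total ‖f - z‖ ‖c - (f - c) - z‖ with h | h
  · exact le_max_of_le_right (by linarith)
  · exact le_max_of_le_left (by linarith)

theorem iSup_nnnorm_sub_center_le_of_reflection_mem {S : Set E} {c : E}
    (hS : ∀ f ∈ S, c - (f - c) ∈ S) (z : E) :
    ⨆ f ∈ S, (‖f - c‖₊ : ℝ≥0∞) ≤ ⨆ f ∈ S, (‖f - z‖₊ : ℝ≥0∞) := by
  refine iSup₂_le fun f hf => ?_
  rcases le_max_iff.mp (norm_sub_le_max_norm_sub_reflection c f z) with h | h
  · exact le_iSup₂_of_le f hf (by exact_mod_cast h)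
  · exact le_iSup₂_of_le (c - (f - c)) (hS f hf) (by exact_mod_cast h)

end Reflection

section Minimizer

variable {F : Type*} [NormedAddCommGroup F] [InnerProductSpace ℝ F]

theorem real_inner_eq_zero_of_forall_norm_le_norm_add_smul {e w : F}
    (h : ∀ t : ℝ, ‖e‖ ≤ ‖e + t • w‖) : ⟪e, w⟫_ℝ = 0 := by
  rcases eq_or_ne w 0 with rfl | hw
  · exact inner_zero_right e
  set c := ⟪e, w⟫_ℝ
  set s := ‖w‖ ^ 2
  have hs : 0 < s := by positivity
  have hquad : ∀ t : ℝ, 0 ≤ 2 * (t * c) + t ^ 2 * s := fun t => by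
    have hsq : ‖e‖ ^ 2 ≤ ‖e + t • w‖ ^ 2 := pow_le_pow_left₀ (norm_nonneg e) (h t) 2
    rw [norm_add_sq_real, real_inner_smul_right, norm_smul, mul_pow, Real.norm_eq_abs,
      sq_abs] at hsq
    linarith
  have hvertex : 2 * (-c / s * c) + (-c / s) ^ 2 * s = -(c ^ 2 / s) := by
    field_simp
    ring
  have hc : c ^ 2 / s ≤ 0 := by linarith [hquad (-c / s)]
  have hc' : c ^ 2 ≤ 0 := by rwa [div_le_iff₀ hs, zero_mul] at hc
  exact pow_eq_zero_iff (n := 2) two_ne_zero |>.mp (le_antisymm hc' (sq_nonneg c))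

variable {H : Type*} [AddCommGroup H] [Module ℝ H]

theorem LinearMap.real_inner_apply_eq_zero_of_forall_norm_apply_le {A : H →ₗ[ℝ] F}
    {K : Submodule ℝ H} {f₀ : H} (hmin : ∀ u ∈ K, ‖A f₀‖ ≤ ‖A (f₀ + u)‖) {u : H}
    (hu : u ∈ K) : ⟪A f₀, A u⟫_ℝ = 0 :=
  real_inner_eq_zero_of_forall_norm_le_norm_add_smul fun t => by
    simpa only [map_add, map_smul] using hmin (t • u) (K.smul_mem t hu)

theorem LinearMap.norm_apply_sub_eq_norm_apply_add_of_forall_norm_apply_le {A : H →ₗ[ℝ] F}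
    {K : Submodule ℝ H} {f₀ : H} (hmin : ∀ u ∈ K, ‖A f₀‖ ≤ ‖A (f₀ + u)‖) {u : H}
    (hu : u ∈ K) : ‖A (f₀ - u)‖ = ‖A (f₀ + u)‖ := by
  rw [map_sub, map_add]
  exact norm_sub_eq_norm_add <| by
    rw [real_inner_comm]; exact A.real_inner_apply_eq_zero_of_forall_norm_apply_le hmin hu

end Minimizer

theorem stmt_17_general {H : Type*} [NormedAddCommGroup H] [InnerProductSpace ℝ H]
    {m : ℕ} (V : Submodule ℝ H) [CompleteSpace V]
    (L : H →L[ℝ] EuclideanSpace ℝ (Fin m))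
    (y : EuclideanSpace ℝ (Fin m))
    (ε : ℝ)
    (fhat : H) (hdata : L fhat = y)
    (hmin : ∀ f : H, L f = y →
      ‖fhat - (V.orthogonalProjectionOnto fhat : H)‖ ≤ ‖f - (V.orthogonalProjectionOnto f : H)‖) :
    ∀ z : H,
      (⨆ f ∈ {f : H | L f = y ∧ ‖f - (V.orthogonalProjectionOnto f : H)‖ ≤ ε},
          (‖f - fhat‖₊ : ENNReal)) ≤
      ⨆ f ∈ {f : H | L f = y ∧ ‖f - (V.orthogonalProjectionOnto f : H)‖ ≤ ε},
          (‖f - z‖₊ : ENNReal) := by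
  set A : H →ₗ[ℝ] H := LinearMap.id - V.subtype ∘ₗ (V.orthogonalProjectionOnto : H →ₗ[ℝ] V)
  have hA : ∀ f, A f = f - V.orthogonalProjectionOnto f := fun _ => rfl
  have hAmin : ∀ u ∈ LinearMap.ker L.toLinearMap, ‖A fhat‖ ≤ ‖A (fhat + u)‖ := fun u hu => by
    rw [hA, hA]
    exact hmin _ (by simpa [hdata] using hu)
  refine iSup_nnnorm_sub_center_le_of_reflection_mem ?_
  rintro f ⟨hLf, hεf⟩
  have hu : f - fhat ∈ LinearMap.ker L.toLinearMap := by simp [hLf, hdata]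
  have hsymm := A.norm_apply_sub_eq_norm_apply_add_of_forall_norm_apply_le hAmin hu
  rw [add_sub_cancel, hA, hA] at hsymm
  exact ⟨by simp [hLf, hdata], hsymm ▸ hεf⟩

theorem stmt_17 {H : Type*} [NormedAddCommGroup H] [InnerProductSpace ℝ H]
    {m : ℕ} (V : Submodule ℝ H) [CompleteSpace V]
    (L : H →L[ℝ] EuclideanSpace ℝ (Fin m))
    (hVL : V ⊓ LinearMap.ker (L : H →ₗ[ℝ] EuclideanSpace ℝ (Fin m)) = ⊥)
    (μ : ℝ) (hμ : ∀ u ∈ LinearMap.ker (L : H →ₗ[ℝ] EuclideanSpace ℝ (Fin m)), u ≠ 0 →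
      ‖u‖ ≤ μ * ‖u - (V.orthogonalProjectionOnto u : H)‖)
    (y : EuclideanSpace ℝ (Fin m)) (hy : y ∈ LinearMap.range (L : H →ₗ[ℝ] EuclideanSpace ℝ (Fin m)))
    (ε : ℝ) (hε : 0 < ε)
    (fhat : H) (hdata : L fhat = y)
    (hmin : ∀ f : H, L f = y →
      ‖fhat - (V.orthogonalProjectionOnto fhat : H)‖ ≤ ‖f - (V.orthogonalProjectionOnto f : H)‖)
    (hmodel : ‖fhat - (V.orthogonalProjectionOnto fhat : H)‖ ≤ ε) :
    ∀ z : H,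
      (⨆ f ∈ {f : H | L f = y ∧ ‖f - (V.orthogonalProjectionOnto f : H)‖ ≤ ε},
          (‖f - fhat‖₊ : ENNReal)) ≤
      ⨆ f ∈ {f : H | L f = y ∧ ‖f - (V.orthogonalProjectionOnto f : H)‖ ≤ ε},
          (‖f - z‖₊ : ENNReal) :=
  stmt_17_general V L y ε fhat hdata hmin
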